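/- arXiv:1906.12220 — 6 statements merged into one kernel-verified Lean document; each statement's English description precedes it below -/
import Mathlib

section
/- Let X be a metric space, μ a Borel probability measure on X, and f : X → X a continuous map. Then the following are equivalent: (1) for every pair of disjoint open sets U, V ⊆ X one has μ(U) + μ(f⁻¹(V)) ≤ 1; (2) for every open set U ⊆ X one has μ(U) = μ(f⁻¹(U)). -/
/-!
Write `ν = f_* μ`, so that (1) says `μ U + ν V ≤ 1` for disjoint open `U`, `V`. Testing this
against `V` and the complement of its closure gives `μ V ≤ ν (closure V)`, and symmetrically
with `μ` and `ν` exchanged. In a metric space every closed `F` inside an open `W` has an open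
neighbourhood `V` with `closure V ⊆ W`, and finite measures are inner regular by closed sets on
open sets, hence `μ W ≤ ν W` and `ν W ≤ μ W`. Conversely, if `μ` and `ν` agree on open sets then
`μ U + ν V = μ (U ∪ V) ≤ 1`.
-/

open MeasureTheory

section DisjointOpenSets

variable {X : Type*} [TopologicalSpace X] [MeasurableSpace X] [OpensMeasurableSpace X]
  {μ ν : Measure X}

theorem measure_le_measure_closure_of_disjoint_add_le_one [IsProbabilityMeasure ν]
    (h : ∀ U V : Set X, IsOpen U → IsOpen V → Disjoint U V → μ U + ν V ≤ 1)
    {V : Set X} (hV : IsOpen V) : μ V ≤ ν (closure V) := by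
  refine ENNReal.le_of_add_le_add_right (measure_ne_top ν (closure V)ᶜ) ?_
  calc μ V + ν (closure V)ᶜ ≤ 1 :=
        h _ _ hV isClosed_closure.isOpen_compl (Set.disjoint_compl_right_iff_subset.2 subset_closure)
    _ = ν (closure V) + ν (closure V)ᶜ := (prob_add_prob_compl isClosed_closure.measurableSet).symm

theorem measure_le_of_disjoint_add_le_one [NormalSpace X] [μ.WeaklyRegular]
    [IsProbabilityMeasure ν]
    (h : ∀ U V : Set X, IsOpen U → IsOpen V → Disjoint U V → μ U + ν V ≤ 1)
    {W : Set X} (hW : IsOpen W) : μ W ≤ ν W := by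
  refine le_of_forall_lt fun r hr => ?_
  obtain ⟨F, hFW, hF, hrF⟩ := hW.exists_lt_isClosed hr
  obtain ⟨V, hV, hFV, hVW⟩ := normal_exists_closure_subset hF hW hFW
  calc r < μ F := hrF
    _ ≤ μ V := measure_mono hFV
    _ ≤ ν (closure V) := measure_le_measure_closure_of_disjoint_add_le_one h hV
    _ ≤ ν W := measure_mono hVW

end DisjointOpenSets

theorem stmt_0 {X : Type*} [MetricSpace X] [MeasurableSpace X] [BorelSpace X]
    (μ : MeasureTheory.Measure X) [MeasureTheory.IsProbabilityMeasure μ]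
    (f : X → X) (hf : Continuous f) :
    (∀ U V : Set X, IsOpen U → IsOpen V → Disjoint U V → μ U + μ (f ⁻¹' V) ≤ 1) ↔
      ∀ U : Set X, IsOpen U → μ U = μ (f ⁻¹' U) := by
  set ν := μ.map f
  have : IsProbabilityMeasure ν := Measure.isProbabilityMeasure_map hf.aemeasurable
  have hν : ∀ s : Set X, IsOpen s → ν s = μ (f ⁻¹' s) := fun s hs =>
    Measure.map_apply hf.measurable hs.measurableSet
  constructor
  · intro h U hU
    have hμν : ∀ U V : Set X, IsOpen U → IsOpen V → Disjoint U V → μ U + ν V ≤ 1 :=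
      fun U V hU hV hUV => hν V hV ▸ h U V hU hV hUV
    have hνμ : ∀ U V : Set X, IsOpen U → IsOpen V → Disjoint U V → ν U + μ V ≤ 1 :=
      fun U V hU hV hUV => add_comm (μ V) (ν U) ▸ hμν V U hV hU hUV.symm
    rw [← hν U hU]
    exact le_antisymm (measure_le_of_disjoint_add_le_one hμν hU)
      (measure_le_of_disjoint_add_le_one hνμ hU)
  · intro h U V hU hV hUV
    rw [← h V hV, ← measure_union hUV hV.measurableSet]
    exact prob_le_one
end

section
/- Let (X,d,∘) be a compact topological group with bi-invariant metric d and Haar probability measure μ, let n ≥ 2, and let Tₙ be a maximum n-packing of X. Then for every Borel measurable U ⊆ X: μ(B₋₂₋ₙ₊₂(U)) ≤ μ_{Tₙ}(B₋₂₋ₙ₊₁(U)) ≤ μ(U) ≤ μ_{Tₙ}(B₊₂₋ₙ₊₁(U)) ≤ μ(B₊₂₋ₙ₊₂(U)), where B₋ᵣ and B₊ᵣ denote inner and outer generalized closed balls of radius r = 2^{-n+1} resp. 2^{-n+2}. -/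
open MeasureTheory

/-- Outer generalized closed ball: `{x | d(x,U) ≤ r}`. -/
def outerBall {X : Type*} [MetricSpace X] (r : ℝ) (U : Set X) : Set X :=
  {x | Metric.infDist x U ≤ r}

/-- Inner generalized closed ball: `{x | d(x,Uᶜ) ≥ r}`. -/
def innerBall {X : Type*} [MetricSpace X] (r : ℝ) (U : Set X) : Set X :=
  {x | r ≤ Metric.infDist x Uᶜ}

/-- `T` is an `n`-packing of `S`: `T ⊆ S` with pairwise distances `> 2^{-n}`. -/
def IsNPacking {X : Type*} [MetricSpace X] (n : ℕ) (S : Set X) (T : Finset X) : Prop :=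
  ↑T ⊆ S ∧ (↑T : Set X).Pairwise fun a b => (2 : ℝ) ^ (-(n : ℤ)) < dist a b

/-- `κ_S(n)`: the maximum cardinality of an `n`-packing of `S`. -/
noncomputable def packingNumber {X : Type*} [MetricSpace X] (S : Set X) (n : ℕ) : ℕ :=
  sSup {k | ∃ T : Finset X, IsNPacking n S T ∧ T.card = k}

/-- Normalized counting measure `μ_T(S) = |T ∩ S| / |T|`. -/
noncomputable def muT {X : Type*} [MetricSpace X] (T : Finset X) (S : Set X) : ENNReal :=
  ((((↑T : Set X) ∩ S).ncard : ENNReal)) / (T.card : ENNReal)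

/-!
Right multiplication is an isometry, so every right translate `T g` of the maximum packing `T`
is again a maximum packing. For packings `T, T'` with `T'` maximum, if the closed
`2^{-n}`-neighbourhood of `A` lies in `B`, then `(T ∩ A) ∪ (T' \ B)` is a packing, whence
`|T ∩ A| ≤ |T' ∩ B|`. Integrating `|T g ∩ S|` over `g` against the left-invariant Haar measure
gives `|T| μ(S)`, and each of the four inequalities follows by comparing `T g` with `T` for
suitable `A, B`, using `d(x, U) ≤ d(a, U) + d(x, a)`.
-/

section Balls

open Metric

variable {X : Type*} [MetricSpace X] {U : Set X} {a : X} {r s : ℝ}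

lemma isClosed_outerBall (r : ℝ) (U : Set X) : IsClosed (outerBall r U) :=
  isClosed_le (continuous_infDist_pt U) continuous_const

lemma isClosed_innerBall (r : ℝ) (U : Set X) : IsClosed (innerBall r U) :=
  isClosed_le continuous_const (continuous_infDist_pt Uᶜ)

lemma outerBall_mono (U : Set X) (h : r ≤ s) : outerBall r U ⊆ outerBall s U :=
  fun _ hx => le_trans hx h

lemma innerBall_anti (U : Set X) (h : r ≤ s) : innerBall s U ⊆ innerBall r U :=
  fun _ hx => le_trans h hx

lemma innerBall_subset (hr : 0 < r) : innerBall r U ⊆ U := by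
  intro x hx
  by_contra hxU
  exact (hr.trans_le hx).ne' (infDist_zero_of_mem hxU)

lemma closedBall_subset_outerBall_of_mem (ha : a ∈ U) : closedBall a r ⊆ outerBall r U :=
  fun _ hx => (infDist_le_dist_of_mem ha).trans hx

lemma closedBall_subset_outerBall (ha : a ∈ outerBall s U) :
    closedBall a r ⊆ outerBall (s + r) U :=
  fun _ hx => infDist_le_infDist_add_dist.trans (add_le_add ha hx)

lemma closedBall_subset_innerBall (ha : a ∈ innerBall s U) :
    closedBall a r ⊆ innerBall (s - r) U := by
  intro x hx
  have : infDist a Uᶜ ≤ infDist x Uᶜ + dist x a := dist_comm a x ▸ infDist_le_infDist_add_dist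
  calc s - r ≤ infDist a Uᶜ - dist x a := sub_le_sub ha (mem_closedBall.1 hx)
    _ ≤ infDist x Uᶜ := by linarith

end Balls

lemma ncard_coe_inter_eq_card_filter {α : Type*} (T : Finset α) (A : Set α)
    [DecidablePred (· ∈ A)] : ((T : Set α) ∩ A).ncard = (T.filter (· ∈ A)).card := by
  rw [← Set.ncard_coe_finset, Finset.coe_filter]
  rfl

section Packing

variable {X : Type*} [MetricSpace X] {n : ℕ} {S : Set X} {T T' : Finset X}

lemma IsCompact.bddAbove_card_isNPacking (hS : IsCompact S) (n : ℕ) :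
    BddAbove {k | ∃ T : Finset X, IsNPacking n S T ∧ T.card = k} := by
  obtain ⟨c, -, hc, hcover⟩ :=
    finite_cover_balls_of_compact hS (e := (2 : ℝ) ^ (-(n : ℤ)) / 2) (by positivity)
  refine ⟨hc.toFinset.card, ?_⟩
  rintro k ⟨T, hT, rfl⟩
  have hcenter : ∀ x ∈ T, ∃ y ∈ c, dist x y < (2 : ℝ) ^ (-(n : ℤ)) / 2 := fun x hx => by
    simpa using hcover (hT.1 hx)
  choose! f hfc hfd using hcenter
  -- two points of a packing cannot share the centre of a ball of radius half the packing radius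
  refine Finset.card_le_card_of_injOn f (fun x hx => hc.mem_toFinset.2 (hfc x hx)) ?_
  intro x hx y hy hxy
  by_contra hne
  have hx' := hfd x hx
  rw [hxy] at hx'
  linarith [hT.2 hx hy hne, hfd y hy, dist_triangle_right x y (f y)]

lemma IsNPacking.card_le_packingNumber (hS : IsCompact S) (hT : IsNPacking n S T) :
    T.card ≤ packingNumber S n :=
  le_csSup (hS.bddAbove_card_isNPacking n) ⟨T, hT, rfl⟩

lemma packingNumber_pos (hS : IsCompact S) (hne : S.Nonempty) : 0 < packingNumber S n := by
  obtain ⟨x, hx⟩ := hne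
  have : IsNPacking n S {x} := ⟨by simpa using hx, by simp⟩
  have := this.card_le_packingNumber hS
  rw [Finset.card_singleton] at this
  omega

lemma IsNPacking.map_isometry {f : X ↪ X} (hf : Isometry f) (hT : IsNPacking n Set.univ T) :
    IsNPacking n Set.univ (T.map f) := by
  refine ⟨Set.subset_univ _, ?_⟩
  rw [Finset.coe_map]
  rintro _ ⟨x, hx, rfl⟩ _ ⟨y, hy, rfl⟩ hxy
  rw [hf.dist_eq]
  exact hT.2 hx hy (ne_of_apply_ne f hxy)

lemma IsNPacking.ncard_inter_le (hS : IsCompact S) (hT : IsNPacking n S T)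
    (hT' : IsNPacking n S T') (hT'max : T'.card = packingNumber S n) {A B : Set X}
    (hAB : ∀ a ∈ A, Metric.closedBall a ((2 : ℝ) ^ (-(n : ℤ))) ⊆ B) :
    ((T : Set X) ∩ A).ncard ≤ ((T' : Set X) ∩ B).ncard := by
  classical
  rw [ncard_coe_inter_eq_card_filter, ncard_coe_inter_eq_card_filter]
  set TA := T.filter (· ∈ A)
  set TB' := T'.filter (· ∉ B)
  have hfar : ∀ a ∈ TA, ∀ b ∈ TB', (2 : ℝ) ^ (-(n : ℤ)) < dist b a := fun a ha b hb => by
    by_contra! h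
    exact (Finset.mem_filter.1 hb).2 (hAB a (Finset.mem_filter.1 ha).2 h)
  have hdisj : Disjoint TA TB' := Finset.disjoint_left.2 fun a ha hb =>
    (hfar a ha a hb).not_ge (by rw [dist_self]; positivity)
  have hpack : IsNPacking n S (TA ∪ TB') := by
    refine ⟨?_, ?_⟩
    · rw [Finset.coe_union]
      exact Set.union_subset ((Finset.coe_subset.2 (Finset.filter_subset _ _)).trans hT.1)
        ((Finset.coe_subset.2 (Finset.filter_subset _ _)).trans hT'.1)
    · rw [Finset.coe_union, Set.pairwise_union]
      refine ⟨hT.2.mono (Finset.coe_subset.2 (Finset.filter_subset _ _)),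
        hT'.2.mono (Finset.coe_subset.2 (Finset.filter_subset _ _)), fun a ha b hb _ => ?_⟩
      exact ⟨dist_comm a b ▸ hfar a ha b hb, hfar a ha b hb⟩
  have := hpack.card_le_packingNumber hS
  rw [Finset.card_union_of_disjoint hdisj, ← hT'max] at this
  have hsplit : (T'.filter (· ∈ B)).card + TB'.card = T'.card := by
    convert Finset.card_filter_add_card_filter_not (s := T') (· ∈ B)
  omega

end Packing

open scoped ENNReal in
lemma ncard_coe_inter_eq_sum_indicator {α : Type*} (T : Finset α) (S : Set α) :
    ((((T : Set α) ∩ S).ncard : ℕ) : ℝ≥0∞) = ∑ p ∈ T, S.indicator 1 p := by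
  classical
  rw [ncard_coe_inter_eq_card_filter, Finset.card_filter]
  push_cast
  simp only [Set.indicator_apply, Pi.one_apply]

section Averaging

open scoped ENNReal

variable {G : Type*} [Group G] [MeasurableSpace G] [MeasurableMul G] (μ : Measure G)
  [μ.IsMulLeftInvariant]

lemma lintegral_ncard_map_mulRight_inter (T : Finset G) {S : Set G} (hS : MeasurableSet S) :
    ∫⁻ g, ((((T.map (mulRightEmbedding g) : Set G) ∩ S).ncard : ℕ) : ℝ≥0∞) ∂μ = T.card * μ S := by
  simp only [ncard_coe_inter_eq_sum_indicator, Finset.sum_map, mulRightEmbedding_apply]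
  rw [lintegral_finsetSum T (f := fun p g => S.indicator 1 (p * g))
    fun p _ => (measurable_one.indicator hS).comp (measurable_const_mul p)]
  simp only [lintegral_mul_left_eq_self (S.indicator 1), lintegral_indicator_one hS,
    Finset.sum_const, nsmul_eq_mul]

end Averaging

section Counting

open scoped ENNReal

variable {X : Type*} [MetricSpace X] [Group X] [MeasurableSpace X] [MeasurableMul X]
  (μ : Measure X) [IsProbabilityMeasure μ] [μ.IsMulLeftInvariant] {T : Finset X} {S B : Set X}

lemma measure_le_muT_of_forall_ncard_le (hT : T.Nonempty) (hS : MeasurableSet S)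
    (h : ∀ g, ((T.map (mulRightEmbedding g) : Set X) ∩ S).ncard ≤ ((T : Set X) ∩ B).ncard) :
    μ S ≤ muT T B := by
  have hcard : (T.card : ℝ≥0∞) ≠ 0 := by simpa using hT.card_pos.ne'
  rw [muT, ENNReal.le_div_iff_mul_le (Or.inl hcard) (Or.inl (ENNReal.natCast_ne_top _)),
    mul_comm, ← lintegral_ncard_map_mulRight_inter μ T hS]
  calc _ ≤ ∫⁻ _, ((((T : Set X) ∩ B).ncard : ℕ) : ℝ≥0∞) ∂μ :=
        lintegral_mono fun g => Nat.cast_le.2 (h g)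
    _ = _ := by simp

lemma muT_le_measure_of_forall_ncard_le (hT : T.Nonempty) (hS : MeasurableSet S)
    (h : ∀ g, ((T : Set X) ∩ B).ncard ≤ ((T.map (mulRightEmbedding g) : Set X) ∩ S).ncard) :
    muT T B ≤ μ S := by
  have hcard : (T.card : ℝ≥0∞) ≠ 0 := by simpa using hT.card_pos.ne'
  rw [muT, ENNReal.div_le_iff_le_mul (Or.inl hcard) (Or.inl (ENNReal.natCast_ne_top _)),
    mul_comm, ← lintegral_ncard_map_mulRight_inter μ T hS]
  calc _ = ∫⁻ _, ((((T : Set X) ∩ B).ncard : ℕ) : ℝ≥0∞) ∂μ := by simp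
    _ ≤ _ := lintegral_mono fun g => Nat.cast_le.2 (h g)

end Counting

theorem stmt_2_general {X : Type*} [MetricSpace X] [CompactSpace X] [Group X] [IsTopologicalGroup X]
    [MeasurableSpace X] [BorelSpace X]
    (hbi : ∀ a b c : X, dist (a * c) (b * c) = dist a b ∧ dist (c * a) (c * b) = dist a b)
    (μ : Measure X) [IsProbabilityMeasure μ] [μ.IsMulLeftInvariant]
    (n : ℕ)
    (T : Finset X) (hT : IsNPacking n Set.univ T)
    (hTmax : T.card = packingNumber (Set.univ : Set X) n)
    (U : Set X) (hU : MeasurableSet U) :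
    μ (innerBall ((2 : ℝ) ^ (-(n : ℤ) + 2)) U) ≤ muT T (innerBall ((2 : ℝ) ^ (-(n : ℤ) + 1)) U) ∧
    muT T (innerBall ((2 : ℝ) ^ (-(n : ℤ) + 1)) U) ≤ μ U ∧
    μ U ≤ muT T (outerBall ((2 : ℝ) ^ (-(n : ℤ) + 1)) U) ∧
    muT T (outerBall ((2 : ℝ) ^ (-(n : ℤ) + 1)) U) ≤ μ (outerBall ((2 : ℝ) ^ (-(n : ℤ) + 2)) U) := by
  set r : ℝ := (2 : ℝ) ^ (-(n : ℤ))
  have hr : 0 < r := by positivity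
  have hr1 : (2 : ℝ) ^ (-(n : ℤ) + 1) = 2 * r := by rw [zpow_add₀ two_ne_zero]; ring
  have hr2 : (2 : ℝ) ^ (-(n : ℤ) + 2) = 4 * r := by
    rw [zpow_add₀ two_ne_zero, mul_comm]; congr 1; norm_num
  rw [hr1, hr2]
  have hTne : T.Nonempty :=
    Finset.card_pos.1 (hTmax ▸ packingNumber_pos isCompact_univ Set.univ_nonempty)
  have hTg (g : X) : IsNPacking n Set.univ (T.map (mulRightEmbedding g)) :=
    hT.map_isometry (Isometry.of_dist_eq fun a b => (hbi a b g).1)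
  have hTg_max (g : X) : (T.map (mulRightEmbedding g)).card = packingNumber Set.univ n :=
    (Finset.card_map _).trans hTmax
  refine ⟨measure_le_muT_of_forall_ncard_le μ hTne (isClosed_innerBall _ _).measurableSet
      fun g => (hTg g).ncard_inter_le isCompact_univ hT hTmax fun a ha => ?_,
    muT_le_measure_of_forall_ncard_le μ hTne hU
      fun g => hT.ncard_inter_le isCompact_univ (hTg g) (hTg_max g) fun a ha => ?_,
    measure_le_muT_of_forall_ncard_le μ hTne hU
      fun g => (hTg g).ncard_inter_le isCompact_univ hT hTmax fun a ha => ?_,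
    muT_le_measure_of_forall_ncard_le μ hTne (isClosed_outerBall _ _).measurableSet
      fun g => hT.ncard_inter_le isCompact_univ (hTg g) (hTg_max g) fun a ha => ?_⟩
  · exact (closedBall_subset_innerBall ha).trans (innerBall_anti U (by linarith))
  · exact (closedBall_subset_innerBall ha).trans (innerBall_subset (by linarith))
  · exact (closedBall_subset_outerBall_of_mem ha).trans (outerBall_mono U (by linarith))
  · exact (closedBall_subset_outerBall ha).trans (outerBall_mono U (by linarith))

theorem stmt_2 {X : Type*} [MetricSpace X] [CompactSpace X] [Group X] [IsTopologicalGroup X]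
    [MeasurableSpace X] [BorelSpace X]
    (hbi : ∀ a b c : X, dist (a * c) (b * c) = dist a b ∧ dist (c * a) (c * b) = dist a b)
    (μ : Measure X) [IsProbabilityMeasure μ] [μ.IsMulLeftInvariant] [μ.Regular]
    (n : ℕ) (hn : 2 ≤ n)
    (T : Finset X) (hT : IsNPacking n Set.univ T)
    (hTmax : T.card = packingNumber (Set.univ : Set X) n)
    (U : Set X) (hU : MeasurableSet U) :
    μ (innerBall ((2 : ℝ) ^ (-(n : ℤ) + 2)) U) ≤ muT T (innerBall ((2 : ℝ) ^ (-(n : ℤ) + 1)) U) ∧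
    muT T (innerBall ((2 : ℝ) ^ (-(n : ℤ) + 1)) U) ≤ μ U ∧
    μ U ≤ muT T (outerBall ((2 : ℝ) ^ (-(n : ℤ) + 1)) U) ∧
    muT T (outerBall ((2 : ℝ) ^ (-(n : ℤ) + 1)) U) ≤ μ (outerBall ((2 : ℝ) ^ (-(n : ℤ) + 2)) U) :=
  stmt_2_general hbi μ n T hT hTmax U hU
end

section
/- Let (X,d) be a compact metric space carrying two topological group structures with operations ∘ and ∘′, and suppose d is left-invariant for both operations, i.e. d(c∘a, c∘b) = d(a,b) and d(c∘′a, c∘′b) = d(a,b) for all a,b,c ∈ X. Then the Haar probability measure of (X,∘) equals the Haar probability measure of (X,∘′). -/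
/-- A (compact) topological group structure on a topological space `X`:
a group operation with identity and inverses, where multiplication and inversion
are continuous. -/
structure TopGroupStructure (X : Type*) [TopologicalSpace X] where
  mul : X → X → X
  one : X
  inv : X → X
  mul_assoc : ∀ a b c, mul (mul a b) c = mul a (mul b c)
  one_mul : ∀ a, mul one a = a
  mul_one : ∀ a, mul a one = a
  inv_mul : ∀ a, mul (inv a) a = one
  continuous_mul : Continuous fun p : X × X => mul p.1 p.2
  continuous_inv : Continuous inv

open MeasureTheory Metric Set
open scoped ENNReal NNReal BoundedContinuousFunction

namespace TopGroupStructure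

variable {X : Type*} [TopologicalSpace X] (G : TopGroupStructure X)

theorem mul_inv_self (a : X) : G.mul a (G.inv a) = G.one := by
  have h1 : G.mul (G.inv (G.inv a)) (G.inv a) = G.one := G.inv_mul _
  calc G.mul a (G.inv a)
      = G.mul (G.mul G.one a) (G.inv a) := by rw [G.one_mul]
    _ = G.mul (G.mul (G.mul (G.inv (G.inv a)) (G.inv a)) a) (G.inv a) := by rw [h1]
    _ = G.mul (G.mul (G.inv (G.inv a)) (G.mul (G.inv a) a)) (G.inv a) := by
        rw [G.mul_assoc (G.inv (G.inv a)) (G.inv a) a]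
    _ = G.mul (G.inv (G.inv a)) (G.mul (G.mul (G.inv a) a) (G.inv a)) := by
        rw [G.mul_assoc (G.inv (G.inv a)) (G.mul (G.inv a) a) (G.inv a)]
    _ = G.mul (G.inv (G.inv a)) (G.inv a) := by rw [G.inv_mul, G.one_mul]
    _ = G.one := h1

end TopGroupStructure

theorem image_mul_ball {X : Type*} [MetricSpace X] (G : TopGroupStructure X)
    (hd : ∀ a b c : X, dist (G.mul c a) (G.mul c b) = dist a b) (c x : X) (r : ℝ) :
    (fun a => G.mul c a) '' Metric.ball x r = Metric.ball (G.mul c x) r := by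
  ext b
  constructor
  · rintro ⟨a, ha, rfl⟩
    simpa [Metric.mem_ball, hd] using ha
  · intro hb
    refine ⟨G.mul (G.inv c) b, ?_, ?_⟩
    · have hcb : G.mul c (G.mul (G.inv c) b) = b := by
        rw [← G.mul_assoc, G.mul_inv_self, G.one_mul]
      have : dist (G.mul (G.inv c) b) x = dist b (G.mul c x) := by
        rw [← hd _ _ c, hcb]
      simpa [Metric.mem_ball, this] using hb
    · show G.mul c (G.mul (G.inv c) b) = b
      rw [← G.mul_assoc, G.mul_inv_self, G.one_mul]

/-- The μ-measure of balls of a fixed radius is constant, for invariant μ. -/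
theorem ball_const {X : Type*} [MetricSpace X] [MeasurableSpace X] [BorelSpace X]
    (G : TopGroupStructure X)
    (hd : ∀ a b c : X, dist (G.mul c a) (G.mul c b) = dist a b)
    (μ : MeasureTheory.Measure X)
    (hinv : ∀ (c : X) (U : Set X), MeasurableSet U → μ ((fun a => G.mul c a) '' U) = μ U)
    (x y : X) (r : ℝ) : μ (Metric.ball x r) = μ (Metric.ball y r) := by
  set c := G.mul y (G.inv x) with hc
  have hcx : G.mul c x = y := by rw [hc, G.mul_assoc, G.inv_mul, G.mul_one]
  calc μ (Metric.ball x r) = μ ((fun a => G.mul c a) '' Metric.ball x r) :=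
        (hinv c _ measurableSet_ball).symm
    _ = μ (Metric.ball (G.mul c x) r) := by rw [image_mul_ball G hd]
    _ = μ (Metric.ball y r) := by rw [hcx]

section Aux

variable {X : Type*} [MetricSpace X] [CompactSpace X] [MeasurableSpace X] [BorelSpace X]
  [Nonempty X]
  (μ μ' : Measure X) [IsProbabilityMeasure μ] [IsProbabilityMeasure μ']

theorem ball_pos (hμball : ∀ x y r, μ (Metric.ball x r) = μ (Metric.ball y r))
    {δ : ℝ} (hδ : 0 < δ) (x : X) : μ (Metric.ball x δ) ≠ 0 := by
  intro h0
  obtain ⟨t, ht⟩ : ∃ t : Finset X, univ ⊆ ⋃ i ∈ t, Metric.ball i δ :=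
    isCompact_univ.elim_finite_subcover (fun x => Metric.ball x δ) (fun _ => isOpen_ball)
      (fun y _ => Set.mem_iUnion.2 ⟨y, mem_ball_self hδ⟩)
  have hle : μ univ ≤ ∑ i ∈ t, μ (Metric.ball i δ) :=
    le_trans (measure_mono ht) (measure_biUnion_finset_le t _)
  have hz : ∑ i ∈ t, μ (Metric.ball i δ) = 0 :=
    Finset.sum_eq_zero fun i _ => (hμball i x δ).trans h0
  rw [measure_univ, hz] at hle
  exact (by norm_num : ¬ ((1 : ℝ≥0∞) ≤ 0)) hle

/-- Key measurability fact. -/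
theorem meas_kernel (f : X → ℝ≥0∞) (hf : Measurable f) (δ : ℝ) :
    Measurable (Function.uncurry fun x y : X =>
      if dist x y < δ then f x else 0) := by
  have hset : MeasurableSet {p : X × X | dist p.1 p.2 < δ} :=
    (isOpen_lt (by fun_prop) continuous_const).measurableSet
  exact Measurable.ite hset (hf.comp measurable_fst) measurable_const

theorem lintegral_le_aux
    (hμball : ∀ x y r, μ (Metric.ball x r) = μ (Metric.ball y r))
    (hμ'ball : ∀ x y r, μ' (Metric.ball x r) = μ' (Metric.ball y r))
    (hballeq : ∀ x r, μ (Metric.ball x r) = μ' (Metric.ball x r))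
    (f : X →ᵇ ℝ≥0) : ∫⁻ x, f x ∂μ ≤ ∫⁻ x, f x ∂μ' := by
  apply ENNReal.le_of_forall_pos_le_add
  intro ε hε _
  -- uniform continuity
  obtain ⟨δ, hδ, hfu⟩ := Metric.uniformContinuous_iff.1
    (CompactSpace.uniformContinuous_of_continuous f.continuous) ε (by exact_mod_cast hε)
  have hfle : ∀ x y : X, dist x y < δ → (f x : ℝ≥0∞) ≤ (f y : ℝ≥0∞) + ε := by
    intro x y h
    have h2 : dist (f x) (f y) < ε := hfu h
    rw [NNReal.dist_eq] at h2
    have : (f x : ℝ) ≤ (f y : ℝ) + ε := by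
      have := (abs_sub_lt_iff.1 h2).1; linarith
    have h3 : (f x : ℝ≥0) ≤ f y + ε := by exact_mod_cast this
    exact_mod_cast h3
  set x₀ : X := Classical.arbitrary X
  set m : ℝ≥0∞ := μ (Metric.ball x₀ δ) with hm
  have hm0 : m ≠ 0 := ball_pos μ hμball hδ x₀
  have hmtop : m ≠ ∞ := (measure_lt_top μ _).ne
  have hfmeas : Measurable fun x : X => (f x : ℝ≥0∞) :=
    (measurable_coe_nnreal_ennreal.comp f.continuous.measurable)
  set F : X → X → ℝ≥0∞ := fun x y => if dist x y < δ then (f x : ℝ≥0∞) else 0 with hF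
  have hFmeas := meas_kernel (fun x : X => (f x : ℝ≥0∞)) hfmeas δ
  -- inner integral in y
  have inner_y : ∀ x : X, ∫⁻ y, F x y ∂μ' = (f x : ℝ≥0∞) * m := by
    intro x
    have : ∀ y, F x y = (Metric.ball x δ).indicator (fun _ => (f x : ℝ≥0∞)) y := by
      intro y
      simp [hF, Set.indicator, Metric.mem_ball, dist_comm]
    simp_rw [this]
    rw [lintegral_indicator measurableSet_ball, setLIntegral_const,
      hμ'ball x x₀ δ, ← hballeq x₀ δ]
  -- inner integral in x, bounded
  have inner_x : ∀ y : X, ∫⁻ x, F x y ∂μ ≤ ((f y : ℝ≥0∞) + ε) * m := by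
    intro y
    have heq : ∀ x, F x y = (Metric.ball y δ).indicator (fun x => (f x : ℝ≥0∞)) x := by
      intro x
      simp [hF, Set.indicator, Metric.mem_ball]
    simp_rw [heq]
    rw [lintegral_indicator measurableSet_ball]
    calc ∫⁻ x in Metric.ball y δ, (f x : ℝ≥0∞) ∂μ
        ≤ ∫⁻ _ in Metric.ball y δ, ((f y : ℝ≥0∞) + ε) ∂μ := by
          apply setLIntegral_mono measurable_const
          intro x hx
          exact hfle x y (Metric.mem_ball.1 hx)
      _ = ((f y : ℝ≥0∞) + ε) * μ (Metric.ball y δ) := setLIntegral_const _ _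
      _ = ((f y : ℝ≥0∞) + ε) * m := by rw [hμball y x₀ δ]
  -- Fubini
  have swap : ∫⁻ x, ∫⁻ y, F x y ∂μ' ∂μ = ∫⁻ y, ∫⁻ x, F x y ∂μ ∂μ' :=
    lintegral_lintegral_swap hFmeas.aemeasurable
  have lhs : ∫⁻ x, ∫⁻ y, F x y ∂μ' ∂μ = (∫⁻ x, (f x : ℝ≥0∞) ∂μ) * m := by
    simp_rw [inner_y]
    rw [lintegral_mul_const _ hfmeas]
  have rhs : ∫⁻ y, ∫⁻ x, F x y ∂μ ∂μ' ≤ ((∫⁻ y, (f y : ℝ≥0∞) ∂μ') + ε) * m := by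
    calc ∫⁻ y, ∫⁻ x, F x y ∂μ ∂μ' ≤ ∫⁻ y, ((f y : ℝ≥0∞) + ε) * m ∂μ' :=
          lintegral_mono inner_x
      _ = (∫⁻ y, ((f y : ℝ≥0∞) + ε) ∂μ') * m := lintegral_mul_const _ (by fun_prop)
      _ = ((∫⁻ y, (f y : ℝ≥0∞) ∂μ') + ε) * m := by
          rw [lintegral_add_right _ measurable_const, lintegral_const, measure_univ, mul_one]
  have key : (∫⁻ x, (f x : ℝ≥0∞) ∂μ) * m ≤ ((∫⁻ y, (f y : ℝ≥0∞) ∂μ') + ε) * m := by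
    rw [← lhs, swap]; exact rhs
  exact (ENNReal.mul_le_mul_iff_left hm0 hmtop).1 key

/-- μ and μ' agree on balls by the symmetric Fubini trick. -/
theorem ball_measure_eq
    (hμball : ∀ x y r, μ (Metric.ball x r) = μ (Metric.ball y r))
    (hμ'ball : ∀ x y r, μ' (Metric.ball x r) = μ' (Metric.ball y r))
    (x : X) (r : ℝ) : μ (Metric.ball x r) = μ' (Metric.ball x r) := by
  set F : X → X → ℝ≥0∞ := fun a b => if dist a b < r then 1 else 0 with hF
  have hFmeas := meas_kernel (fun _ : X => (1 : ℝ≥0∞)) measurable_const r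
  have inner_y : ∀ a : X, ∫⁻ b, F a b ∂μ' = μ' (Metric.ball a r) := by
    intro a
    have : ∀ b, F a b = (Metric.ball a r).indicator (fun _ => (1 : ℝ≥0∞)) b := by
      intro b; simp [hF, Set.indicator, Metric.mem_ball, dist_comm]
    simp_rw [this]
    rw [lintegral_indicator measurableSet_ball, setLIntegral_const, one_mul]
  have inner_x : ∀ b : X, ∫⁻ a, F a b ∂μ = μ (Metric.ball b r) := by
    intro b
    have : ∀ a, F a b = (Metric.ball b r).indicator (fun _ => (1 : ℝ≥0∞)) a := by
      intro a; simp [hF, Set.indicator, Metric.mem_ball]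
    simp_rw [this]
    rw [lintegral_indicator measurableSet_ball, setLIntegral_const, one_mul]
  have swap : ∫⁻ a, ∫⁻ b, F a b ∂μ' ∂μ = ∫⁻ b, ∫⁻ a, F a b ∂μ ∂μ' :=
    lintegral_lintegral_swap hFmeas.aemeasurable
  simp_rw [inner_y, inner_x] at swap
  have h1 : ∫⁻ a, μ' (Metric.ball a r) ∂μ = μ' (Metric.ball x r) := by
    have : ∀ a, μ' (Metric.ball a r) = μ' (Metric.ball x r) := fun a => hμ'ball a x r
    simp_rw [this, lintegral_const, measure_univ, mul_one]
  have h2 : ∫⁻ b, μ (Metric.ball b r) ∂μ' = μ (Metric.ball x r) := by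
    have : ∀ b, μ (Metric.ball b r) = μ (Metric.ball x r) := fun b => hμball b x r
    simp_rw [this, lintegral_const, measure_univ, mul_one]
  rw [h1, h2] at swap
  exact swap.symm

end Aux

theorem stmt_3 {X : Type*} [MetricSpace X] [CompactSpace X] [MeasurableSpace X] [BorelSpace X]
    (G G' : TopGroupStructure X)
    (hd : ∀ a b c : X, dist (G.mul c a) (G.mul c b) = dist a b)
    (hd' : ∀ a b c : X, dist (G'.mul c a) (G'.mul c b) = dist a b)
    (μ μ' : MeasureTheory.Measure X)
    [MeasureTheory.IsProbabilityMeasure μ] [MeasureTheory.IsProbabilityMeasure μ']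
    (hreg : μ.Regular) (hreg' : μ'.Regular)
    (hinv : ∀ (c : X) (U : Set X), MeasurableSet U → μ ((fun a => G.mul c a) '' U) = μ U)
    (hinv' : ∀ (c : X) (U : Set X), MeasurableSet U → μ' ((fun a => G'.mul c a) '' U) = μ' U) :
    μ = μ' := by
  haveI : Nonempty X := ⟨G.one⟩
  have hμball : ∀ x y r, μ (Metric.ball x r) = μ (Metric.ball y r) :=
    fun x y r => ball_const G hd μ hinv x y r
  have hμ'ball : ∀ x y r, μ' (Metric.ball x r) = μ' (Metric.ball y r) :=
    fun x y r => ball_const G' hd' μ' hinv' x y r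
  have hballeq := ball_measure_eq μ μ' hμball hμ'ball
  apply MeasureTheory.ext_of_forall_lintegral_eq_of_IsFiniteMeasure
  intro f
  refine le_antisymm ?_ ?_
  · exact lintegral_le_aux μ μ' hμball hμ'ball hballeq f
  · exact lintegral_le_aux μ' μ hμ'ball hμball (fun x r => (hballeq x r).symm) f
end

section
/- Let (X,d) be a compact metric space and ∘ a continuous group operation on X. Then d′(a,b) := sup_{x∈X} sup_{y∈X} d(x∘a∘y, x∘b∘y) defines a metric on X which is bi-invariant for ∘ and induces the same topology as d. -/
/-!
Taking `x = y = 1` in the supremum gives `d ≤ d′`, and `d′` inherits symmetry and the triangle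
inequality from `d` termwise; bi-invariance is a reindexing of the supremum by `y ↦ c * y` or
`x ↦ x * c`. The one analytic input is uniform continuity of `(x, a, y) ↦ x * a * y` on the
compact space `X³`, which makes `d′ a b` small uniformly once `d a b` is small; with `d ≤ d′`
this shows that both metrics have the same open sets.
-/

open Metric

noncomputable def biInvDist {X : Type*} [Mul X] [Dist X] (a b : X) : ℝ :=
  ⨆ x : X, ⨆ y : X, dist (x * a * y) (x * b * y)

section PseudoMetric

variable {X : Type*} [PseudoMetricSpace X]

theorem dist_mul_mul_le_biInvDist [Mul X] [BoundedSpace X] (a b x y : X) :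
    dist (x * a * y) (x * b * y) ≤ biInvDist a b := by
  have hdiam : ∀ p q : X, dist p q ≤ diam (Set.univ : Set X) := fun p q =>
    dist_le_diam_of_mem (Bornology.isBounded_univ.2 ‹_›) trivial trivial
  refine (le_ciSup ⟨_, Set.forall_mem_range.2 fun y' => hdiam _ _⟩ y).trans <|
    le_ciSup (f := fun x => ⨆ y, dist (x * a * y) (x * b * y)) ⟨_, Set.forall_mem_range.2
      fun x' => Real.iSup_le (fun y' => hdiam _ _) diam_nonneg⟩ x

theorem biInvDist_le [Mul X] [Nonempty X] {a b : X} {M : ℝ}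
    (h : ∀ x y : X, dist (x * a * y) (x * b * y) ≤ M) : biInvDist a b ≤ M :=
  ciSup_le fun x => ciSup_le fun y => h x y

theorem dist_le_biInvDist [MulOneClass X] [BoundedSpace X] (a b : X) :
    dist a b ≤ biInvDist a b := by
  simpa using dist_mul_mul_le_biInvDist a b 1 1

theorem biInvDist_self [Mul X] (a : X) : biInvDist a a = 0 := by
  simp [biInvDist]

theorem biInvDist_comm [Mul X] (a b : X) : biInvDist a b = biInvDist b a := by
  simp only [biInvDist, dist_comm]

theorem biInvDist_triangle [Mul X] [Nonempty X] [BoundedSpace X] (a b c : X) :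
    biInvDist a c ≤ biInvDist a b + biInvDist b c :=
  biInvDist_le fun x y => (dist_triangle _ (x * b * y) _).trans <|
    add_le_add (dist_mul_mul_le_biInvDist a b x y) (dist_mul_mul_le_biInvDist b c x y)

theorem biInvDist_mul_right [Group X] (a b c : X) :
    biInvDist (a * c) (b * c) = biInvDist a b := by
  unfold biInvDist
  refine iSup_congr fun x => (Equiv.mulLeft c).iSup_congr fun y => ?_
  simp only [Equiv.coe_mulLeft, mul_assoc]

theorem biInvDist_mul_left [Group X] (a b c : X) :
    biInvDist (c * a) (c * b) = biInvDist a b := by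
  unfold biInvDist
  refine (Equiv.mulRight c).iSup_congr fun x => ?_
  simp only [Equiv.coe_mulRight, mul_assoc]

theorem exists_pos_forall_dist_lt_biInvDist_lt [Mul X] [ContinuousMul X] [CompactSpace X]
    [Nonempty X] {ε : ℝ} (hε : 0 < ε) :
    ∃ δ > 0, ∀ a b : X, dist a b < δ → biInvDist a b < ε := by
  have hu : UniformContinuous fun p : X × X × X => p.1 * p.2.1 * p.2.2 :=
    CompactSpace.uniformContinuous_of_continuous (by fun_prop)
  obtain ⟨δ, hδ, h⟩ := Metric.uniformContinuous_iff.1 hu (ε / 2) (half_pos hε)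
  refine ⟨δ, hδ, fun a b hab => (biInvDist_le fun x y => (@h (x, a, y) (x, b, y) ?_).le).trans_lt
    (half_lt_self hε)⟩
  simpa [Prod.dist_eq] using hab

theorem isOpen_iff_biInvDist [MulOneClass X] [ContinuousMul X] [CompactSpace X] {s : Set X} :
    IsOpen s ↔ ∀ a ∈ s, ∃ ε > 0, ∀ b, biInvDist a b < ε → b ∈ s := by
  rw [Metric.isOpen_iff]
  refine forall₂_congr fun a _ => ⟨fun ⟨ε, hε, hball⟩ => ⟨ε, hε, fun b hb => hball ?_⟩,
    fun ⟨ε, hε, hs⟩ => ?_⟩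
  · exact mem_ball'.2 ((dist_le_biInvDist a b).trans_lt hb)
  · obtain ⟨δ, hδ, hδε⟩ := exists_pos_forall_dist_lt_biInvDist_lt (X := X) hε
    exact ⟨δ, hδ, fun b hb => hs b (hδε a b (mem_ball'.1 hb))⟩

end PseudoMetric

theorem biInvDist_eq_zero {X : Type*} [MetricSpace X] [MulOneClass X] [BoundedSpace X] {a b : X} :
    biInvDist a b = 0 ↔ a = b :=
  ⟨fun h => dist_le_zero.1 (h ▸ dist_le_biInvDist a b), fun h => h ▸ biInvDist_self a⟩

theorem stmt_5 {X : Type*} [MetricSpace X] [CompactSpace X] [Group X]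
    (hcont : Continuous fun p : X × X => p.1 * p.2)
    (d' : X → X → ℝ)
    (hd' : ∀ a b : X, d' a b = ⨆ x : X, ⨆ y : X, dist (x * a * y) (x * b * y)) :
    (∀ a b : X, d' a b = 0 ↔ a = b) ∧
    (∀ a b : X, d' a b = d' b a) ∧
    (∀ a b c : X, d' a c ≤ d' a b + d' b c) ∧
    (∀ a b c : X, d' (a * c) (b * c) = d' a b ∧ d' (c * a) (c * b) = d' a b) ∧
    (∀ s : Set X, IsOpen s ↔ ∀ a ∈ s, ∃ ε > 0, ∀ b : X, d' a b < ε → b ∈ s) := by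
  have : ContinuousMul X := ⟨hcont⟩
  obtain rfl : d' = biInvDist := funext₂ hd'
  exact ⟨fun _ _ => biInvDist_eq_zero, biInvDist_comm, biInvDist_triangle,
    fun a b c => ⟨biInvDist_mul_right a b c, biInvDist_mul_left a b c⟩,
    fun _ => isOpen_iff_biInvDist⟩
end

section
/- Let (X,d) be a complete separable metric space and μ a Borel probability measure on X such that the measure of open balls depends only on the radius, i.e. μ(B(x,r)) = μ(B(y,r)) for all x,y ∈ X and all r > 0. Then X is compact. -/
open Metric MeasureTheory Set
open scoped ENNReal

theorem stmt_7 {X : Type*} [MetricSpace X] [CompleteSpace X]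
    [TopologicalSpace.SeparableSpace X] [MeasurableSpace X] [BorelSpace X]
    (μ : MeasureTheory.Measure X) [MeasureTheory.IsProbabilityMeasure μ]
    (h : ∀ (x y : X) (r : ℝ), 0 < r → μ (Metric.ball x r) = μ (Metric.ball y r)) :
    CompactSpace X := by
  have tb : TotallyBounded (Set.univ : Set X) := by
    rw [Metric.totallyBounded_iff]
    intro ε hε
    by_contra hcon
    push_neg at hcon
    -- construct an ε-separated sequence
    have H : ∀ s : Finset X, ∃ x : X, ∀ y ∈ s, ε ≤ dist x y := by
      intro s
      have := hcon ↑s s.finite_toSet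
      rw [Set.not_subset] at this
      obtain ⟨x, -, hx⟩ := this
      refine ⟨x, fun y hy => ?_⟩
      by_contra hlt
      push_neg at hlt
      exact hx (Set.mem_biUnion hy (mem_ball.2 hlt))
    choose F hF using H
    classical
    let f : ℕ → Finset X := fun n => Nat.rec ∅ (fun _ s => insert (F s) s) n
    have hfs : ∀ n, f (n + 1) = insert (F (f n)) (f n) := fun n => rfl
    have hmono : ∀ m n, m ≤ n → f m ⊆ f n := by
      intro m n hmn
      induction n with
      | zero => simp [Nat.le_zero.1 hmn]
      | succ k ih =>
        rcases Nat.lt_or_ge m (k + 1) with hlt | hge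
        · exact (ih (Nat.lt_succ_iff.1 hlt)).trans (by rw [hfs]; exact Finset.subset_insert _ _)
        · have : m = k + 1 := le_antisymm hmn hge
          simp [this]
    set g : ℕ → X := fun n => F (f n) with hg
    have hsep : ∀ m n, m < n → ε ≤ dist (g n) (g m) := by
      intro m n hmn
      apply hF
      have : g m ∈ f (m + 1) := by rw [hfs]; exact Finset.mem_insert_self _ _
      exact hmono (m + 1) n hmn this
    have hsep' : ∀ m n, m ≠ n → ε ≤ dist (g m) (g n) := by
      intro m n hmn
      rcases hmn.lt_or_gt with hl | hl
      · rw [dist_comm]; exact hsep m n hl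
      · exact hsep n m hl
    -- disjoint balls of radius ε/2
    have hε2 : 0 < ε / 2 := by linarith
    have hdisj : Pairwise (Function.onFun Disjoint fun n => ball (g n) (ε / 2)) := by
      intro m n hmn
      apply Metric.ball_disjoint_ball
      rw [add_halves]
      exact hsep' m n hmn
    set c : ENNReal := μ (ball (g 0) (ε / 2)) with hc
    -- c > 0 from separability
    have hcpos : c ≠ 0 := by
      intro hc0
      obtain ⟨D, hDc, hDd⟩ := TopologicalSpace.exists_countable_dense X
      have hcover : (Set.univ : Set X) ⊆ ⋃ x ∈ D, ball x (ε / 2) := by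
        intro x _
        obtain ⟨y, hy⟩ := Metric.dense_iff.1 hDd x (ε / 2) hε2
        exact Set.mem_biUnion hy.2 (by rw [mem_ball, dist_comm]; exact hy.1)
      have h1 : (1 : ℝ≥0∞) ≤ μ (⋃ x ∈ D, ball x (ε / 2)) := by
        rw [← measure_univ (μ := μ)]
        exact measure_mono hcover
      have h2 : μ (⋃ x ∈ D, ball x (ε / 2)) ≤ ∑' x : D, μ (ball (x : X) (ε / 2)) :=
        measure_biUnion_le μ hDc _
      have h3 : ∀ x : D, μ (ball (x : X) (ε / 2)) = c := fun x => h _ _ _ hε2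
      rw [tsum_congr h3, hc0, tsum_zero] at h2
      exact (lt_irrefl (0 : ℝ≥0∞)) (lt_of_lt_of_le zero_lt_one (h1.trans h2))
    -- infinite disjoint union has infinite measure
    have hsum : μ (⋃ n, ball (g n) (ε / 2)) = ∑' n : ℕ, μ (ball (g n) (ε / 2)) :=
      measure_iUnion hdisj fun n => measurableSet_ball
    have hce : ∀ n : ℕ, μ (ball (g n) (ε / 2)) = c := fun n => h _ _ _ hε2
    have htop : μ (⋃ n, ball (g n) (ε / 2)) = ⊤ := by
      rw [hsum, tsum_congr hce, ENNReal.tsum_const_eq_top_of_ne_zero hcpos]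
    have : μ (⋃ n, ball (g n) (ε / 2)) ≤ 1 := by
      rw [← measure_univ (μ := μ)]; exact measure_mono (Set.subset_univ _)
    rw [htop] at this
    simp at this
  have : IsCompact (Set.univ : Set X) :=
    TotallyBounded.isCompact_of_isClosed tb isClosed_univ
  exact ⟨this⟩
end

section
/- Let ℓ : (0,∞) → ℕ be lower semicontinuous and u : (0,∞) → ℕ be upper semicontinuous, with ℓ(x) ≤ u(x) for all x > 0 and u(x) ≤ ℓ(x+ε) for all x, ε > 0. For n ∈ ℕ set Uₙ := {x ∈ (0,∞) : ℓ(x) = u(x) = n}. Then: (i) ℓ and u are nondecreasing; (ii) each Uₙ is open and order-connected (an interval); (iii) whenever x ∈ Uₙ and y ∈ U_{n+k+1} for some k ∈ ℕ, one has x < y; (iv) the complement (0,∞) ∖ ⋃ₙ Uₙ is countable, each of its points being isolated in it. -/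
theorem stmt_8 (ℓ u : ℝ → ℕ)
    (hℓ : ∀ n : ℕ, IsOpen {x : ℝ | 0 < x ∧ n < ℓ x})
    (hu : ∀ n : ℕ, IsOpen {x : ℝ | 0 < x ∧ u x < n})
    (hle : ∀ x : ℝ, 0 < x → ℓ x ≤ u x)
    (hshift : ∀ x ε : ℝ, 0 < x → 0 < ε → u x ≤ ℓ (x + ε))
    (U : ℕ → Set ℝ) (hU : ∀ n, U n = {x : ℝ | 0 < x ∧ ℓ x = n ∧ u x = n}) :
    (∀ x y : ℝ, 0 < x → x ≤ y → ℓ x ≤ ℓ y ∧ u x ≤ u y) ∧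
    (∀ n, IsOpen (U n) ∧ ∀ x ∈ U n, ∀ y ∈ U n, ∀ z : ℝ, x ≤ z → z ≤ y → z ∈ U n) ∧
    (∀ (n k : ℕ) (x y : ℝ), x ∈ U n → y ∈ U (n + k + 1) → x < y) ∧
    (Set.Countable ({x : ℝ | 0 < x} \ ⋃ n, U n) ∧
      ∀ x ∈ {x : ℝ | 0 < x} \ ⋃ n, U n, ∃ ε > 0,
        ∀ y ∈ {x : ℝ | 0 < x} \ ⋃ n, U n, |y - x| < ε → y = x) := by
  have key : ∀ x y : ℝ, 0 < x → x < y → u x ≤ ℓ y := by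
    intro x y hx hxy
    have h := hshift x (y - x) hx (by linarith)
    have e : x + (y - x) = y := by ring
    rwa [e] at h
  have mono : ∀ x y : ℝ, 0 < x → x ≤ y → ℓ x ≤ ℓ y ∧ u x ≤ u y := by
    intro x y hx hxy
    rcases eq_or_lt_of_le hxy with rfl | h
    · exact ⟨le_refl _, le_refl _⟩
    · have hy : 0 < y := hx.trans h
      have h1 := key x y hx h
      exact ⟨le_trans (hle x hx) h1, le_trans h1 (hle y hy)⟩
  have hCmem : ∀ x ∈ {x : ℝ | 0 < x} \ ⋃ n, U n, 0 < x ∧ ℓ x < u x := by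
    intro x hx
    obtain ⟨hx0, hx1⟩ := hx
    refine ⟨hx0, ?_⟩
    by_contra h
    push_neg at h
    have heq : ℓ x = u x := le_antisymm (hle x hx0) h
    exact hx1 (Set.mem_iUnion.2 ⟨u x, by rw [hU]; exact ⟨hx0, heq, rfl⟩⟩)
  refine ⟨mono, ?_, ?_, ?_, ?_⟩
  · intro n
    constructor
    · rcases n with _ | m
      · have e : U 0 = {x : ℝ | 0 < x ∧ u x < 1} := by
          ext x
          rw [hU]
          simp only [Set.mem_setOf_eq]
          constructor
          · rintro ⟨hx, h1, h2⟩; exact ⟨hx, by omega⟩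
          · rintro ⟨hx, h1⟩
            have := hle x hx
            exact ⟨hx, by omega, by omega⟩
        rw [e]; exact hu 1
      · have e : U (m+1) = {x : ℝ | 0 < x ∧ m < ℓ x} ∩ {x : ℝ | 0 < x ∧ u x < m+2} := by
          ext x
          rw [hU]
          simp only [Set.mem_inter_iff, Set.mem_setOf_eq]
          constructor
          · rintro ⟨hx, h1, h2⟩; exact ⟨⟨hx, by omega⟩, ⟨hx, by omega⟩⟩
          · rintro ⟨⟨hx, h1⟩, ⟨_, h2⟩⟩
            have := hle x hx
            exact ⟨hx, by omega, by omega⟩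
        rw [e]; exact (hℓ m).inter (hu (m+2))
    · intro x hx y hy z hxz hzy
      rw [hU] at hx hy ⊢
      obtain ⟨hx0, hx1, hx2⟩ := hx
      obtain ⟨hy0, hy1, hy2⟩ := hy
      have hz0 : 0 < z := lt_of_lt_of_le hx0 hxz
      have h1 := mono x z hx0 hxz
      have h2 := mono z y hz0 hzy
      exact ⟨hz0, by omega, by omega⟩
  · intro n k x y hx hy
    rw [hU] at hx hy
    by_contra h
    push_neg at h
    obtain ⟨hy0, hy1, hy2⟩ := hy
    obtain ⟨hx0, hx1, hx2⟩ := hx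
    have := mono y x hy0 h
    omega
  · rw [Set.countable_iff_exists_injOn]
    refine ⟨ℓ, ?_⟩
    intro x hx y hy hxy
    obtain ⟨hx0, hxg⟩ := hCmem x hx
    obtain ⟨hy0, hyg⟩ := hCmem y hy
    by_contra hne
    rcases lt_trichotomy x y with h | h | h
    · have := key x y hx0 h
      omega
    · exact hne h
    · have := key y x hy0 h
      omega
  · intro x hx
    obtain ⟨hx0, hxg⟩ := hCmem x hx
    rcases Nat.eq_zero_or_pos (ℓ x) with h0 | hpos
    · obtain ⟨ε, hε, hball⟩ := Metric.isOpen_iff.1 (hu (u x + 1)) x ⟨hx0, by omega⟩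
      refine ⟨ε, hε, ?_⟩
      intro y hy hdist
      obtain ⟨hy0, hyg⟩ := hCmem y hy
      have hyW : y ∈ {z : ℝ | 0 < z ∧ u z < u x + 1} := by
        apply hball
        rw [Metric.mem_ball, Real.dist_eq]
        exact hdist
      obtain ⟨-, hyu⟩ := hyW
      by_contra hne
      rcases lt_trichotomy y x with h | h | h
      · have := key y x hy0 h
        omega
      · exact hne h
      · have := key x y hx0 h
        omega
    · obtain ⟨ε, hε, hball⟩ := Metric.isOpen_iff.1
        ((hℓ (ℓ x - 1)).inter (hu (u x + 1))) x
        ⟨⟨hx0, by omega⟩, ⟨hx0, by omega⟩⟩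
      refine ⟨ε, hε, ?_⟩
      intro y hy hdist
      obtain ⟨hy0, hyg⟩ := hCmem y hy
      have hyW : y ∈ {z : ℝ | 0 < z ∧ ℓ x - 1 < ℓ z} ∩ {z : ℝ | 0 < z ∧ u z < u x + 1} := by
        apply hball
        rw [Metric.mem_ball, Real.dist_eq]
        exact hdist
      obtain ⟨⟨-, hyl⟩, ⟨-, hyu⟩⟩ := hyW
      by_contra hne
      rcases lt_trichotomy y x with h | h | h
      · have := key y x hy0 h
        omega
      · exact hne h
      · have := key x y hx0 h
        omega
end
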